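/- For a (C,C')-controlled Bessel K-operator sequence {T_i}_{i∈I} with C, C' commuting with each other and with T_i*T_i for all i, the frame operator S_{(C,C')} defined by S_{(C,C')}x = Σ_i C' T_i* T_i C x is a positive, bounded, self-adjoint operator on H. -/

import Mathlib

open scoped RightActions

/-- The Mathlib (Dec 2024) notion of a Hilbert C⋆-module: a *right* `A`-module with
`A`-valued inner product, `⟪x, y <• a⟫ = ⟪x, y⟫ * a` (Mathlib has since switched to left
modules, so the old definition is reproduced here). -/
class CStarModuleRight (A E : Type*) [NonUnitalSemiring A] [StarRing A]
    [Module ℂ A] [AddCommGroup E] [Module ℂ E] [PartialOrder A] [SMul Aᵐᵒᵖ E] [Norm A] [Norm E]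
    extends Inner A E where
  inner_add_right {x} {y} {z} : inner x (y + z) = inner x y + inner x z
  inner_self_nonneg {x} : 0 ≤ inner x x
  inner_self {x} : inner x x = 0 ↔ x = 0
  inner_op_smul_right {a : A} {x y : E} : inner x (y <• a) = inner x y * a
  inner_smul_right_complex {z : ℂ} {x} {y} : inner x (z • y) = z • inner x y
  star_inner x y : star (inner x y) = inner y x
  norm_eq_sqrt_norm_inner_self x : ‖x‖ = √‖inner x x‖

variable {A : Type*} [CStarAlgebra A] [PartialOrder A] [StarOrderedRing A]
variable {H : Type*} [NormedAddCommGroup H] [NormedSpace ℂ H] [CompleteSpace H]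
  [SMul Aᵐᵒᵖ H] [CStarModuleRight A H]

/-- `S` is the adjoint of `T` with respect to the `A`-valued inner product. -/
def IsAdjointOf (T S : H →L[ℂ] H) : Prop :=
  ∀ x y : H, inner A (T x) y = inner A x (S y)

/-- `C` belongs to `GL⁺(H)` : invertible (with adjointable inverse), self-adjoint
and positive with respect to the `A`-valued inner product. -/
def MemGLPlus (C : H →L[ℂ] H) : Prop :=
  (∃ Ci : H →L[ℂ] H, Ci.comp C = ContinuousLinearMap.id ℂ H ∧
      C.comp Ci = ContinuousLinearMap.id ℂ H) ∧
  (∀ x y : H, inner A (C x) y = inner A x (C y)) ∧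
  (∀ x : H, (0 : A) ≤ inner A x (C x))

/-!
Write `T ↦ T*` for the adjoint and `P_i = T_i* T_i`. The adjointable operators on `H` form a
C⋆-algebra, in which `0 ≤ P` holds exactly when `P` is self-adjoint with `0 ≤ ⟪x, P x⟫` for all
`x`. So `C`, `C'` and the `P_i` are positive and commute pairwise, and every summand
`C' P_i C` of the frame operator is positive, being a product of commuting positive elements.
Summing the quadratic forms shows that `S` is symmetric and positive. The Bessel bound says
`⟪x, S x⟫ ≤ b ⟪x, x⟫`, and by polarisation this gives `‖S x‖ ≤ b ‖x‖`.
-/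

open MulOpposite

namespace CStarModuleRight

local notation "⟪" x ", " y "⟫" => inner A x y

section Algebraic

omit [StarOrderedRing A] [CompleteSpace H]

/-- A right Hilbert `A`-module is a left Hilbert `Aᵐᵒᵖ`-module. -/
instance : CStarModule Aᵐᵒᵖ H where
  inner x y := op ⟪x, y⟫
  inner_add_right := by simp [inner_add_right]
  inner_self_nonneg {x} := (op_nonneg (a := ⟪x, x⟫)).mpr inner_self_nonneg
  inner_self := by simp [inner_self]
  inner_op_smul_right {a x y} := by
    rw [← op_unop a, ← op_mul, op_inj]; exact inner_op_smul_right
  inner_smul_right_complex {z x y} := by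
    rw [← op_smul, op_inj]; exact inner_smul_right_complex
  star_inner x y := congrArg op (star_inner x y)
  norm_eq_sqrt_norm_inner_self x := norm_eq_sqrt_norm_inner_self (A := A) x

@[simp] lemma inner_zero_left (x : H) : ⟪0, x⟫ = 0 :=
  congrArg unop (CStarModule.inner_zero_left (A := Aᵐᵒᵖ) (E := H))
@[simp] lemma inner_zero_right (x : H) : ⟪x, 0⟫ = 0 :=
  congrArg unop (CStarModule.inner_zero_right (A := Aᵐᵒᵖ) (E := H))
@[simp] lemma inner_add_left (x y z : H) : ⟪x + y, z⟫ = ⟪x, z⟫ + ⟪y, z⟫ :=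
  congrArg unop (CStarModule.inner_add_left (A := Aᵐᵒᵖ) (E := H))
@[simp] lemma inner_neg_left (x y : H) : ⟪-x, y⟫ = -⟪x, y⟫ :=
  congrArg unop (CStarModule.inner_neg_left (A := Aᵐᵒᵖ) (E := H))
@[simp] lemma inner_neg_right (x y : H) : ⟪x, -y⟫ = -⟪x, y⟫ :=
  congrArg unop (CStarModule.inner_neg_right (A := Aᵐᵒᵖ) (E := H))
@[simp] lemma inner_sub_left (x y z : H) : ⟪x - y, z⟫ = ⟪x, z⟫ - ⟪y, z⟫ :=
  congrArg unop (CStarModule.inner_sub_left (A := Aᵐᵒᵖ) (E := H))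
@[simp] lemma inner_sub_right (x y z : H) : ⟪x, y - z⟫ = ⟪x, y⟫ - ⟪x, z⟫ :=
  congrArg unop (CStarModule.inner_sub_right (A := Aᵐᵒᵖ) (E := H))
@[simp] lemma inner_smul_left_complex (c : ℂ) (x y : H) : ⟪c • x, y⟫ = star c • ⟪x, y⟫ :=
  congrArg unop (CStarModule.inner_smul_left_complex (A := Aᵐᵒᵖ) (E := H))
@[simp] lemma inner_smul_left_real (r : ℝ) (x y : H) : ⟪r • x, y⟫ = r • ⟪x, y⟫ :=
  congrArg unop (CStarModule.inner_smul_left_real (A := Aᵐᵒᵖ) (E := H))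
@[simp] lemma inner_smul_right_real (r : ℝ) (x y : H) : ⟪x, r • y⟫ = r • ⟪x, y⟫ :=
  congrArg unop (CStarModule.inner_smul_right_real (A := Aᵐᵒᵖ) (E := H))

variable (A) in
lemma norm_sq_eq (x : H) : ‖x‖ ^ 2 = ‖⟪x, x⟫‖ := CStarModule.norm_sq_eq Aᵐᵒᵖ (E := H)

lemma ext_inner_left {u v : H} (h : ∀ z, ⟪z, u⟫ = ⟪z, v⟫) : u = v := by
  rw [← sub_eq_zero, ← inner_self (A := A), inner_sub_right, h, sub_self]

lemma _root_.IsAdjointOf.symm {T S : H →L[ℂ] H} (h : IsAdjointOf (A := A) T S) :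
    IsAdjointOf (A := A) S T := fun x y => by
  rw [← star_inner, ← h, star_inner]

lemma _root_.IsAdjointOf.unique {T S S' : H →L[ℂ] H} (h : IsAdjointOf (A := A) T S)
    (h' : IsAdjointOf (A := A) T S') : S = S' :=
  ContinuousLinearMap.ext fun y => ext_inner_left fun x => by rw [← h, h']

variable (A H) in
/-- The adjointable operators on `H`, as the pairs `(T, T*)` in the ring
`(H →L[ℂ] H) × (H →L[ℂ] H)ᵐᵒᵖ`; the adjoint will be the swap `(T, T*) ↦ (T*, T)`. -/
def adjointPairs : Subring ((H →L[ℂ] H) × (H →L[ℂ] H)ᵐᵒᵖ) where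
  carrier := {p | IsAdjointOf (A := A) p.1 p.2.unop}
  zero_mem' _ _ := by simp
  one_mem' _ _ := rfl
  add_mem' hp hq x y := by simp [hp x y, hq x y, inner_add_right]
  neg_mem' hp x y := by simp [hp x y]
  mul_mem' hp hq x y := (hp _ _).trans (hq _ _)

variable (A H) in
abbrev Adjointable : Type _ := adjointPairs A H

namespace Adjointable

noncomputable instance : NormedRing (Adjointable A H) := SubringClass.toNormedRing _

def mk (T S : H →L[ℂ] H) (h : IsAdjointOf (A := A) T S) : Adjointable A H := ⟨(T, op S), h⟩

def toCLM (p : Adjointable A H) : H →L[ℂ] H := p.1.1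

instance : CoeFun (Adjointable A H) fun _ => H → H := ⟨fun p => p.toCLM⟩

instance : Star (Adjointable A H) where
  star p := mk p.1.2.unop p.1.1 p.2.symm

lemma isAdjointOf (p : Adjointable A H) : IsAdjointOf (A := A) p.toCLM (star p).toCLM := p.2

lemma inner_apply_eq_inner_star (p : Adjointable A H) (x y : H) :
    ⟪p x, y⟫ = ⟪x, star p y⟫ :=
  p.2 x y

lemma mul_apply (p q : Adjointable A H) (x : H) : (p * q) x = p (q x) := rfl

@[ext]
lemma ext {p q : Adjointable A H} (h : ∀ x, p x = q x) : p = q := by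
  have h₁ : p.toCLM = q.toCLM := ContinuousLinearMap.ext h
  have h₂ : (star p).toCLM = (star q).toCLM := p.isAdjointOf.unique (h₁ ▸ q.isAdjointOf)
  exact Subtype.ext (Prod.ext h₁ (unop_injective h₂))

lemma commute_of_comp_eq {p q : Adjointable A H}
    (h : p.toCLM.comp q.toCLM = q.toCLM.comp p.toCLM) : Commute p q :=
  ext fun x => congrArg (· x) h

lemma isSelfAdjoint_iff {p : Adjointable A H} :
    IsSelfAdjoint p ↔ IsAdjointOf (A := A) p.toCLM p.toCLM := by
  refine ⟨fun h => by simpa only [h.star_eq] using p.isAdjointOf, fun h => ?_⟩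
  exact ext fun x => congrArg (· x) (p.isAdjointOf.unique h)

instance : StarRing (Adjointable A H) where
  star_involutive _ := rfl
  star_mul _ _ := rfl
  star_add _ _ := rfl

lemma inner_star_mul_self_apply (s : Adjointable A H) (x : H) :
    ⟪x, (star s * s) x⟫ = ⟪s x, s x⟫ := by
  rw [mul_apply, ← star_star s, ← inner_apply_eq_inner_star, star_star]

instance : SMul ℂ (Adjointable A H) where
  smul c p := mk (c • p.toCLM) (star c • (star p).toCLM) fun x y => by
    simp [inner_apply_eq_inner_star, inner_smul_right_complex]

def toCLMAddHom : Adjointable A H →+ (H →L[ℂ] H) where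
  toFun := toCLM
  map_zero' := rfl
  map_add' _ _ := rfl

noncomputable instance : Module ℂ (Adjointable A H) :=
  Function.Injective.module ℂ toCLMAddHom (fun _ _ h => ext fun x => congrArg (· x) h)
    fun _ _ => rfl

noncomputable instance : Algebra ℂ (Adjointable A H) :=
  Algebra.ofModule (fun _ _ _ => ext fun _ => rfl) fun c p q => ext fun x =>
    p.toCLM.map_smul c (q x)

instance : StarModule ℂ (Adjointable A H) where
  star_smul _ _ := ext fun _ => rfl

end Adjointable

end Algebraic

section Analytic

omit [CompleteSpace H]

lemma norm_inner_le (x y : H) : ‖⟪x, y⟫‖ ≤ ‖x‖ * ‖y‖ := CStarModule.norm_inner_le H (A := Aᵐᵒᵖ)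

@[fun_prop]
lemma _root_.Continuous.inner_cstarModuleRight {X : Type*} [TopologicalSpace X] {f g : X → H}
    (hf : Continuous f) (hg : Continuous g) : Continuous fun t => ⟪f t, g t⟫ :=
  continuous_unop.comp (CStarModule.continuous_inner.comp (hf.prodMk hg))

lemma _root_.HasSum.inner_right {ι : Type*} {f : ι → H} {a : H} (h : HasSum f a) (y : H) :
    HasSum (fun i => ⟪y, f i⟫) ⟪y, a⟫ :=
  ((CStarModule.innerSL (A := Aᵐᵒᵖ) y).hasSum h).unop

lemma _root_.HasSum.inner_left {ι : Type*} {f : ι → H} {a : H} (h : HasSum f a) (y : H) :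
    HasSum (fun i => ⟪f i, y⟫) ⟪a, y⟫ := by
  simpa only [star_inner] using (h.inner_right (A := A) y).star

namespace Adjointable

lemma norm_apply_sq_le (p : Adjointable A H) (x : H) :
    ‖p x‖ ^ 2 ≤ ‖x‖ * ‖(star p * p) x‖ := by
  rw [norm_sq_eq A, inner_apply_eq_inner_star]
  exact norm_inner_le _ _

lemma norm_toCLM_star_le (p : Adjointable A H) : ‖(star p).toCLM‖ ≤ ‖p.toCLM‖ := by
  refine (star p).toCLM.opNorm_le_bound (norm_nonneg _) fun x => ?_
  have h : ‖star p x‖ ^ 2 ≤ ‖x‖ * (‖p.toCLM‖ * ‖star p x‖) :=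
    (norm_apply_sq_le (star p) x).trans (by gcongr; exact p.toCLM.le_opNorm _)
  rcases (norm_nonneg (star p x)).eq_or_lt with h0 | hpos
  · rw [← h0]; positivity
  · exact le_of_mul_le_mul_left (by nlinarith) hpos

lemma norm_def (p : Adjointable A H) : ‖p‖ = ‖p.toCLM‖ :=
  max_eq_left (norm_toCLM_star_le p)

noncomputable instance : NormedAlgebra ℂ (Adjointable A H) where
  norm_smul_le c p := by simp only [norm_def]; exact norm_smul_le c p.toCLM

instance : CStarRing (Adjointable A H) where
  norm_mul_self_le p := by
    set c := ‖(star p * p).toCLM‖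
    have h : ‖p.toCLM‖ ≤ √c := p.toCLM.opNorm_le_bound (Real.sqrt_nonneg c) fun x => by
      rw [← Real.sqrt_sq (norm_nonneg x), ← Real.sqrt_mul' c (sq_nonneg _),
        Real.le_sqrt (norm_nonneg _) (by positivity)]
      calc ‖p x‖ ^ 2 ≤ ‖x‖ * ‖(star p * p) x‖ := norm_apply_sq_le p x
        _ ≤ ‖x‖ * (c * ‖x‖) := by gcongr; exact (star p * p).toCLM.le_opNorm x
        _ = c * ‖x‖ ^ 2 := by ring
    rw [norm_def, norm_def, ← Real.mul_self_sqrt (norm_nonneg (star p * p).toCLM)]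
    exact mul_self_le_mul_self (norm_nonneg _) h

lemma inner_symm_of_hasSum {ι : Type*} {Q : ι → Adjointable A H} {S : H → H}
    (hQ : ∀ i, IsSelfAdjoint (Q i))
    (hS : ∀ x, HasSum (fun i => Q i x) (S x)) (x y : H) : ⟪S x, y⟫ = ⟪x, S y⟫ := by
  have h : (fun i => ⟪Q i x, y⟫) = fun i => ⟪x, Q i y⟫ :=
    funext fun i => isSelfAdjoint_iff.mp (hQ i) x y
  exact ((hS x).inner_left y).unique (h ▸ (hS y).inner_right x)

lemma isClosed_adjointPairs :
    IsClosed (adjointPairs A H : Set ((H →L[ℂ] H) × (H →L[ℂ] H)ᵐᵒᵖ)) := by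
  have : (adjointPairs A H : Set ((H →L[ℂ] H) × (H →L[ℂ] H)ᵐᵒᵖ)) =
      ⋂ (x : H) (y : H), {p | ⟪p.1 x, y⟫ = ⟪x, p.2.unop y⟫} := by
    ext; simp only [Set.mem_iInter]; rfl
  rw [this]
  exact isClosed_iInter fun x => isClosed_iInter fun y => isClosed_eq (by fun_prop) (by fun_prop)

end Adjointable

lemma norm_apply_le_of_inner_apply_le (S : H →ₗ[ℂ] H) (hsymm : ∀ x y, ⟪S x, y⟫ = ⟪x, S y⟫)
    (hpos : ∀ x, 0 ≤ ⟪x, S x⟫) {b : ℝ} (hb : 0 ≤ b) (hle : ∀ x, ⟪x, S x⟫ ≤ b • ⟪x, x⟫)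
    (y : H) : ‖S y‖ ≤ b * ‖y‖ := by
  set z := S y
  set u := ‖y‖ • z + ‖z‖ • y
  set w := ‖y‖ • z - ‖z‖ • y
  have hpolar : (4 * (‖y‖ * ‖z‖)) • ⟪z, z⟫ = ⟪u, S u⟫ - ⟪w, S w⟫ := by
    have hyz : ⟪y, S z⟫ = ⟪z, z⟫ := (hsymm y z).symm
    simp only [u, w, map_add, map_sub, LinearMap.map_smul_of_tower, inner_add_left,
      inner_add_right, inner_sub_left, inner_sub_right, inner_smul_left_real,
      inner_smul_right_real, hyz]
    module
  have hu : ‖u‖ ≤ 2 * (‖y‖ * ‖z‖) := (norm_add_le _ _).trans_eq <| by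
    rw [norm_smul, norm_smul, norm_norm, norm_norm, mul_comm ‖z‖, two_mul]
  have key : 4 * (‖y‖ * ‖z‖) * ‖z‖ ^ 2 ≤ b * (2 * (‖y‖ * ‖z‖)) ^ 2 :=
    calc 4 * (‖y‖ * ‖z‖) * ‖z‖ ^ 2 = ‖(4 * (‖y‖ * ‖z‖)) • ⟪z, z⟫‖ := by
          rw [norm_smul, ← norm_sq_eq A, Real.norm_of_nonneg (by positivity)]
      _ ≤ ‖b • ⟪u, u⟫‖ := by
          refine CStarAlgebra.norm_le_norm_of_nonneg_of_le
            (smul_nonneg (by positivity) inner_self_nonneg) ?_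
          rw [hpolar]
          exact (sub_le_self _ (hpos w)).trans (hle u)
      _ = b * ‖u‖ ^ 2 := by rw [norm_smul, norm_sq_eq A, Real.norm_of_nonneg hb]
      _ ≤ b * (2 * (‖y‖ * ‖z‖)) ^ 2 := by gcongr
  rcases (norm_nonneg z).eq_or_lt with hz | hz
  · rw [← hz]; positivity
  · have hy : 0 < ‖y‖ := norm_pos_iff.mpr fun hy => by simp [z, hy] at hz
    -- `‖y‖`, `‖z‖` occur with different (defeq) norm instances, which `linarith` would not identify
    generalize ‖y‖ = s at key hy ⊢
    generalize ‖z‖ = t at key hz ⊢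
    exact le_of_mul_le_mul_left (a := 4 * s * t ^ 2) (by linarith) (by positivity)

end Analytic

namespace Adjointable

instance : CompleteSpace (Adjointable A H) := isClosed_adjointPairs.completeSpace_coe

noncomputable instance : CStarAlgebra (Adjointable A H) where

noncomputable instance : PartialOrder (Adjointable A H) := CStarAlgebra.spectralOrder _

instance : StarOrderedRing (Adjointable A H) := CStarAlgebra.spectralOrderedRing _

lemma inner_apply_nonneg {p : Adjointable A H} (hp : 0 ≤ p) (x : H) : 0 ≤ ⟪x, p x⟫ := by
  obtain ⟨s, rfl⟩ := CStarAlgebra.nonneg_iff_eq_star_mul_self.mp hp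
  rw [inner_star_mul_self_apply]
  exact inner_self_nonneg

lemma apply_eq_zero_of_inner_apply_eq_zero {p : Adjointable A H} (hp : 0 ≤ p) {x : H}
    (hx : ⟪x, p x⟫ = 0) : p x = 0 := by
  obtain ⟨s, rfl⟩ := CStarAlgebra.nonneg_iff_eq_star_mul_self.mp hp
  rw [inner_star_mul_self_apply, inner_self] at hx
  rw [mul_apply, hx]
  exact map_zero (star s).toCLM

/-- With `n = p⁻` we have `n p = -n²`, so the form of `n` vanishes on the
range of `n`, forcing `n² = 0`. -/
lemma nonneg_of_inner_apply_nonneg {p : Adjointable A H} (hp : IsSelfAdjoint p)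
    (h : ∀ x, 0 ≤ ⟪x, p x⟫) : 0 ≤ p := by
  set n := p⁻
  have hn : 0 ≤ n := CFC.negPart_nonneg p
  have hn_sa : star n = n := hn.isSelfAdjoint.star_eq
  have hnp : n * p = -(n * n) := by
    conv_lhs => rw [← CFC.posPart_sub_negPart p hp]
    rw [mul_sub, CFC.negPart_mul_posPart, zero_sub]
  have hnn : ∀ x, n (n x) = 0 := fun x => by
    have h₁ : ⟪n x, p (n x)⟫ = -⟪n x, n (n x)⟫ :=
      calc ⟪n x, p (n x)⟫ = ⟪x, (n * p) (n x)⟫ := by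
            rw [inner_apply_eq_inner_star, hn_sa]; rfl
        _ = -⟪x, n (n (n x))⟫ := by rw [hnp]; exact inner_neg_right _ _
        _ = -⟪n x, n (n x)⟫ := by rw [inner_apply_eq_inner_star, hn_sa]
    refine apply_eq_zero_of_inner_apply_eq_zero hn (le_antisymm ?_ (inner_apply_nonneg hn _))
    simpa [h₁] using h (n x)
  rw [← CFC.negPart_eq_zero_iff p hp]
  exact (CStarRing.star_mul_self_eq_zero_iff n).mp (by rw [hn_sa]; exact ext hnn)

lemma mk_nonneg_of_memGLPlus {C : H →L[ℂ] H} (hC : MemGLPlus (A := A) C) :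
    0 ≤ mk C C hC.2.1 :=
  nonneg_of_inner_apply_nonneg (isSelfAdjoint_iff.mpr hC.2.1) hC.2.2

variable {ι : Type*} {Q : ι → Adjointable A H} {S : H → H}

lemma inner_nonneg_of_hasSum (hQ : ∀ i, 0 ≤ Q i) (hS : ∀ x, HasSum (fun i => Q i x) (S x))
    (x : H) : 0 ≤ ⟪x, S x⟫ :=
  hasSum_le (fun i => inner_apply_nonneg (hQ i) x) hasSum_zero ((hS x).inner_right x)

lemma norm_le_of_hasSum (hQ : ∀ i, 0 ≤ Q i) (hS : ∀ x, HasSum (fun i => Q i x) (S x))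
    {b : ℝ} (hb : 0 ≤ b) (hle : ∀ x, ⟪x, S x⟫ ≤ b • ⟪x, x⟫) (x : H) : ‖S x‖ ≤ b * ‖x‖ := by
  have hlim : Filter.Tendsto (fun s x => (∑ i ∈ s, (Q i).toCLM.toLinearMap) x) Filter.atTop
      (nhds S) :=
    tendsto_pi_nhds.mpr fun x => by
      simp only [LinearMap.sum_apply, ContinuousLinearMap.coe_coe]; exact hS x
  exact norm_apply_le_of_inner_apply_le (linearMapOfTendsto S _ hlim)
    (inner_symm_of_hasSum (fun i => (hQ i).isSelfAdjoint) hS) (inner_nonneg_of_hasSum hQ hS)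
    hb hle x

end Adjointable

end CStarModuleRight

open CStarModuleRight Adjointable

/-- the frame operator `S x = Σ_i C' T_i* T_i C x` of a
`(C,C')`-controlled Bessel `K`-operator sequence is positive, bounded and
self-adjoint. -/
theorem stmt_12 {ι : Type*} (C C' : H →L[ℂ] H) (T Ts : ι → H →L[ℂ] H) (S : H → H)
    (hC : MemGLPlus (A := A) C) (hC' : MemGLPlus (A := A) C')
    (hT : ∀ i, IsAdjointOf (A := A) (T i) (Ts i))
    (hCC' : C.comp C' = C'.comp C)
    (hCTT : ∀ i, C.comp ((Ts i).comp (T i)) = ((Ts i).comp (T i)).comp C)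
    (hC'TT : ∀ i, C'.comp ((Ts i).comp (T i)) = ((Ts i).comp (T i)).comp C')
    (b : ℝ) (hb : 0 < b)
    (hBessel : ∀ x : H,
      ∑' i, inner A (T i (C x)) (T i (C' x)) ≤ b • inner A x x)
    (hS : ∀ x : H, HasSum (fun i => C' (Ts i (T i (C x)))) (S x)) :
    (∀ x y : H, inner A (S x) y = inner A x (S y)) ∧
    (∀ x : H, (0 : A) ≤ inner A x (S x)) ∧
    (∃ M : ℝ, ∀ x : H, ‖S x‖ ≤ M * ‖x‖) := by
  let c := mk C C hC.2.1
  let c' := mk C' C' hC'.2.1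
  let P i := star (mk (T i) (Ts i) (hT i)) * mk (T i) (Ts i) (hT i)
  have hc : 0 ≤ c := mk_nonneg_of_memGLPlus hC
  have hc' : 0 ≤ c' := mk_nonneg_of_memGLPlus hC'
  have hQ i : 0 ≤ c' * (P i * c) := by
    have hPc : Commute (P i) c := (commute_of_comp_eq (p := c) (q := P i) (hCTT i)).symm
    have hc'P : Commute c' (P i) := commute_of_comp_eq (hC'TT i)
    have hc'c : Commute c' c := (commute_of_comp_eq (p := c) (q := c') hCC').symm
    exact Commute.mul_nonneg hc' (Commute.mul_nonneg (star_mul_self_nonneg _) hc hPc)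
      (hc'P.mul_right hc'c)
  have hS' : ∀ x, HasSum (fun i => (c' * (P i * c)) x) (S x) := hS
  refine ⟨inner_symm_of_hasSum (fun i => (hQ i).isSelfAdjoint) hS',
    inner_nonneg_of_hasSum hQ hS', b, norm_le_of_hasSum hQ hS' hb.le fun x => ?_⟩
  calc inner A x (S x) = ∑' i, inner A (T i (C x)) (T i (C' x)) := by
        refine ((hS' x).inner_right x).tsum_eq.symm.trans (tsum_congr fun i => ?_)
        rw [← Adjointable.isSelfAdjoint_iff.mp (hQ i).isSelfAdjoint]
        exact (hC'.2.1 _ x).trans ((hT i).symm _ _)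
    _ ≤ b • inner A x x := hBessel x
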